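/- Let ν ≥ 1 be a real number and let (X_n)_{n≥1} be a sequence of real-valued random variables such that u_k^ν and v_k^ν are integrable for every k ≥ 0. Let (b_n)_{n≥1} be a nondecreasing unbounded sequence of positive real numbers. If Σ_{k=1}^∞ ( E[u_k^ν] + E[v_k^ν] − E[u_{k−1}^ν] − E[v_{k−1}^ν] ) / b_k^ν < ∞, then S_n/b_n → 0 almost surely as n → ∞. -/

import Mathlib

/-!
Since `S n = u n - v n` with `u`, `v` nondecreasing and vanishing at `0`, and
`u n ^ ν, v n ^ ν ≤ W n := u n ^ ν + v n ^ ν`, it suffices to show `W n / b n ^ ν → 0`.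
The increments of `W` are nonnegative and the hypothesis says that
`∑ (W (k+1) - W k) / b (k+1) ^ ν` has finite expectation, so this series converges almost
surely. On that event Kronecker's lemma, obtained from dominated convergence for series,
gives `W n / b n ^ ν → 0`.
-/

open MeasureTheory Filter Topology Finset

theorem tendsto_sum_range_div_of_summable_div {w c d : ℕ → ℝ} (hw : ∀ k, 0 ≤ w k)
    (hc : ∀ k, 0 < c k) (hcd : ∀ k n, k < n → c k ≤ d n) (hd : Tendsto d atTop atTop)
    (hs : Summable fun k => w k / c k) :
    Tendsto (fun n => (∑ k ∈ range n, w k) / d n) atTop (𝓝 0) := by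
  have hlim : ∀ k, Tendsto (fun n => if k < n then w k / d n else 0) atTop (𝓝 0) := fun k =>
    (tendsto_const_nhds.div_atTop hd).congr' <|
      (eventually_gt_atTop k).mono fun n hkn => (if_pos hkn).symm
  have hbound : ∀ n k, ‖if k < n then w k / d n else 0‖ ≤ w k / c k := by
    intro n k
    split_ifs with hkn
    · rw [Real.norm_of_nonneg (div_nonneg (hw k) ((hc k).le.trans (hcd k n hkn)))]
      exact div_le_div_of_nonneg_left (hw k) (hc k) (hcd k n hkn)
    · simpa using div_nonneg (hw k) (hc k).le
  have := tendsto_tsum_of_dominated_convergence hs hlim (Eventually.of_forall hbound)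
  rw [tsum_zero] at this
  refine this.congr fun n => ?_
  rw [tsum_eq_sum (s := range n) fun k hk => if_neg (by simpa using hk), sum_div]
  exact sum_congr rfl fun k hk => if_pos (mem_range.1 hk)

theorem tendsto_zero_of_tendsto_rpow {α : Type*} {l : Filter α} {x : α → ℝ} {p : ℝ} (hp : 0 < p)
    (hx : ∀ᶠ a in l, 0 ≤ x a) (h : Tendsto (fun a => x a ^ p) l (𝓝 0)) :
    Tendsto x l (𝓝 0) := by
  have := h.rpow_const (p := p⁻¹) (Or.inr (inv_nonneg.2 hp.le))
  rw [Real.zero_rpow (inv_ne_zero hp.ne')] at this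
  exact this.congr' (hx.mono fun a ha => Real.rpow_rpow_inv ha hp.ne')

theorem tendsto_div_of_rpow_le {α : Type*} {l : Filter α} {x y b : α → ℝ} {p : ℝ} (hp : 0 < p)
    (hx : ∀ a, 0 ≤ x a) (hb : ∀ᶠ a in l, 0 < b a) (hxy : ∀ a, x a ^ p ≤ y a)
    (hy : Tendsto (fun a => y a / b a ^ p) l (𝓝 0)) :
    Tendsto (fun a => x a / b a) l (𝓝 0) := by
  have hxb : ∀ᶠ a in l, 0 ≤ x a / b a := hb.mono fun a ha => div_nonneg (hx a) ha.le
  refine tendsto_zero_of_tendsto_rpow hp hxb ?_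
  refine squeeze_zero' (hxb.mono fun a ha => Real.rpow_nonneg ha p) ?_ hy
  filter_upwards [hb] with a ha
  rw [Real.div_rpow (hx a) ha.le]
  gcongr
  exact hxy a

theorem ae_summable_of_summable_integral {Ω ι : Type*} [MeasurableSpace Ω] [Countable ι]
    {μ : Measure Ω} {g : ι → Ω → ℝ} (hint : ∀ k, Integrable (g k) μ) (hnn : ∀ k, 0 ≤ᵐ[μ] g k)
    (hsum : Summable fun k => ∫ ω, g k ω ∂μ) :
    ∀ᵐ ω ∂μ, Summable fun k => g k ω := by
  have heLpNorm : ∀ k, eLpNorm (g k) 1 μ = ENNReal.ofReal (∫ ω, g k ω ∂μ) := fun k => by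
    rw [eLpNorm_one_eq_lintegral_enorm, ofReal_integral_eq_lintegral_ofReal (hint k) (hnn k)]
    exact lintegral_congr_ae ((hnn k).mono fun ω hω => Real.enorm_eq_ofReal hω)
  have hfin : ∑' k, eLpNorm (g k) 1 μ ≠ ⊤ := by
    rw [tsum_congr heLpNorm,
      ← ENNReal.ofReal_tsum_of_nonneg (fun k => integral_nonneg_of_ae (hnn k)) hsum]
    exact ENNReal.ofReal_ne_top
  filter_upwards [summable_norm_of_tsum_eLpNorm_ne_top le_rfl
    (fun k => (hint k).aestronglyMeasurable) hfin] with ω hω using hω.of_norm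

theorem monotone_sum_Icc_of_nonneg {M : Type*} [AddCommMonoid M] [PartialOrder M]
    [IsOrderedAddMonoid M] {f : ℕ → M} (hf : ∀ i, 0 ≤ f i) :
    Monotone fun k => ∑ i ∈ Icc 1 k, f i :=
  fun _ _ h => sum_le_sum_of_subset_of_nonneg (Icc_subset_Icc_right h) fun i _ _ => hf i

theorem tendsto_div_rpow_of_summable_increments {W b : ℕ → ℝ} {ν : ℝ} (hν : 0 < ν)
    (hW : Monotone W) (hW0 : W 0 = 0) (hb_pos : ∀ n, 1 ≤ n → 0 < b n)
    (hb_mono : ∀ n, 1 ≤ n → b n ≤ b (n + 1)) (hb_top : Tendsto b atTop atTop)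
    (hs : Summable fun k => (W (k + 1) - W k) / b (k + 1) ^ ν) :
    Tendsto (fun n => W n / b n ^ ν) atTop (𝓝 0) := by
  have hb_succ : Monotone fun n => b (n + 1) :=
    monotone_nat_of_le_succ fun n => hb_mono (n + 1) le_add_self
  have hcd : ∀ k n, k < n → b (k + 1) ^ ν ≤ b n ^ ν := by
    intro k n hkn
    obtain ⟨m, rfl⟩ := Nat.exists_eq_add_of_lt hkn
    exact Real.rpow_le_rpow (hb_pos _ le_add_self).le (hb_succ (Nat.le_add_right k m)) hν.le
  have := tendsto_sum_range_div_of_summable_div (fun k => sub_nonneg.2 (hW k.le_succ))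
    (fun k => Real.rpow_pos_of_pos (hb_pos _ le_add_self) ν) hcd
    ((tendsto_rpow_atTop hν).comp hb_top) hs
  simpa only [sum_range_sub, hW0, sub_zero] using this

theorem monotone_rpow_add_rpow {u v : ℕ → ℝ} {p : ℝ} (hp : 0 ≤ p) (hu : Monotone u)
    (hv : Monotone v) (hu0 : 0 ≤ u 0) (hv0 : 0 ≤ v 0) :
    Monotone fun n => u n ^ p + v n ^ p := fun m _ hmn =>
  add_le_add (Real.rpow_le_rpow (hu0.trans (hu m.zero_le)) (hu hmn) hp)
    (Real.rpow_le_rpow (hv0.trans (hv m.zero_le)) (hv hmn) hp)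

theorem tendsto_sub_div_of_summable_rpow_increments {u v b : ℕ → ℝ} {ν : ℝ} (hν : 0 < ν)
    (hu : Monotone u) (hv : Monotone v) (hu0 : u 0 = 0) (hv0 : v 0 = 0)
    (hb_pos : ∀ n, 1 ≤ n → 0 < b n) (hb_mono : ∀ n, 1 ≤ n → b n ≤ b (n + 1))
    (hb_top : Tendsto b atTop atTop)
    (hs : Summable fun k => (u (k + 1) ^ ν + v (k + 1) ^ ν - u k ^ ν - v k ^ ν) / b (k + 1) ^ ν) :
    Tendsto (fun n => (u n - v n) / b n) atTop (𝓝 0) := by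
  have hu_nonneg : ∀ n, 0 ≤ u n := fun n => hu0 ▸ hu n.zero_le
  have hv_nonneg : ∀ n, 0 ≤ v n := fun n => hv0 ▸ hv n.zero_le
  have hlim := tendsto_div_rpow_of_summable_increments hν
    (monotone_rpow_add_rpow hν.le hu hv hu0.ge hv0.ge)
    (by simp [hu0, hv0, Real.zero_rpow hν.ne']) hb_pos hb_mono hb_top
    (by simpa only [sub_sub] using hs)
  have hb_ev : ∀ᶠ n in atTop, 0 < b n := (eventually_ge_atTop 1).mono hb_pos
  have hu_lim := tendsto_div_of_rpow_le hν hu_nonneg hb_ev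
    (fun n => le_add_of_nonneg_right (Real.rpow_nonneg (hv_nonneg n) ν)) hlim
  have hv_lim := tendsto_div_of_rpow_le hν hv_nonneg hb_ev
    (fun n => le_add_of_nonneg_left (Real.rpow_nonneg (hu_nonneg n) ν)) hlim
  simpa only [sub_div, sub_zero] using hu_lim.sub hv_lim

theorem slln_arbitrary_random_variables_pow_general
    {Ω : Type*} [MeasurableSpace Ω] (μ : Measure Ω)
    (X S u v : ℕ → Ω → ℝ)
    (hS : ∀ k ω, S k ω = ∑ i ∈ Finset.Icc 1 k, X i ω)
    (hu : ∀ k ω, u k ω = ∑ i ∈ Finset.Icc 1 k, max (X i ω) 0)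
    (hv : ∀ k ω, v k ω = ∑ i ∈ Finset.Icc 1 k, max (-(X i ω)) 0)
    (ν : ℝ) (hν : 1 ≤ ν)
    (hu_int : ∀ k, Integrable (fun ω => u k ω ^ ν) μ)
    (hv_int : ∀ k, Integrable (fun ω => v k ω ^ ν) μ)
    (b : ℕ → ℝ)
    (hb_pos : ∀ n, 1 ≤ n → 0 < b n)
    (hb_mono : ∀ n, 1 ≤ n → b n ≤ b (n + 1))
    (hb_top : Tendsto b atTop atTop)
    (h_sum : Summable (fun k : ℕ =>
        ((∫ ω, u (k + 1) ω ^ ν ∂μ) + (∫ ω, v (k + 1) ω ^ ν ∂μ)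
          - (∫ ω, u k ω ^ ν ∂μ) - (∫ ω, v k ω ^ ν ∂μ)) / b (k + 1) ^ ν)) :
    ∀ᵐ ω ∂μ, Tendsto (fun n => S n ω / b n) atTop (nhds 0) := by
  have hν0 : 0 < ν := by linarith
  have hu_mono : ∀ ω, Monotone (u · ω) := fun ω => by
    simpa only [hu] using monotone_sum_Icc_of_nonneg fun i => le_max_right (X i ω) 0
  have hv_mono : ∀ ω, Monotone (v · ω) := fun ω => by
    simpa only [hv] using monotone_sum_Icc_of_nonneg fun i => le_max_right (-X i ω) 0
  have hu0 : ∀ ω, u 0 ω = 0 := by simp [hu]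
  have hv0 : ∀ ω, v 0 ω = 0 := by simp [hv]
  set g : ℕ → Ω → ℝ := fun k ω =>
    (u (k + 1) ω ^ ν + v (k + 1) ω ^ ν - u k ω ^ ν - v k ω ^ ν) / b (k + 1) ^ ν
  have hg_nonneg : ∀ k, 0 ≤ᵐ[μ] g k := fun k => Eventually.of_forall fun ω => by
    have hW := monotone_rpow_add_rpow hν0.le (hu_mono ω) (hv_mono ω) (hu0 ω).ge (hv0 ω).ge
    simp only [g, sub_sub]
    exact div_nonneg (sub_nonneg.2 (hW k.le_succ)) (Real.rpow_nonneg (hb_pos _ le_add_self).le ν)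
  have hg_int : ∀ k, Integrable (g k) μ := fun k =>
    ((((hu_int (k + 1)).add (hv_int (k + 1))).sub (hu_int k)).sub (hv_int k)).div_const _
  have hg_sum : Summable fun k => ∫ ω, g k ω ∂μ := h_sum.congr fun k => by
    rw [integral_div, integral_sub, integral_sub, integral_add] <;> fun_prop
  filter_upwards [ae_summable_of_summable_integral hg_int hg_nonneg hg_sum] with ω hω
  have hSuv : ∀ n, S n ω = u n ω - v n ω := fun n => by
    simp only [hS, hu, hv, ← sum_sub_distrib, max_zero_sub_max_neg_zero_eq_self]
  simpa only [hSuv] using tendsto_sub_div_of_summable_rpow_increments hν0 (hu_mono ω)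
    (hv_mono ω) (hu0 ω) (hv0 ω) hb_pos hb_mono hb_top hω

/-- **Strong law of large numbers for arbitrary random variables with `φ(x) = |x|^ν`,
`ν ≥ 1`.** Here `S n = Σ_{i=1}^n X_i`, `u n = Σ_{i=1}^n X_i⁺`, `v n = Σ_{i=1}^n X_i⁻`,
and `x ^ ν` denotes the real power `Real.rpow`. -/
theorem slln_arbitrary_random_variables_pow
    {Ω : Type*} [MeasurableSpace Ω] (μ : Measure Ω) [IsProbabilityMeasure μ]
    (X S u v : ℕ → Ω → ℝ)
    (hXmeas : ∀ i, 1 ≤ i → Measurable (X i))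
    (hS : ∀ k ω, S k ω = ∑ i ∈ Finset.Icc 1 k, X i ω)
    (hu : ∀ k ω, u k ω = ∑ i ∈ Finset.Icc 1 k, max (X i ω) 0)
    (hv : ∀ k ω, v k ω = ∑ i ∈ Finset.Icc 1 k, max (-(X i ω)) 0)
    (ν : ℝ) (hν : 1 ≤ ν)
    (hu_int : ∀ k, Integrable (fun ω => u k ω ^ ν) μ)
    (hv_int : ∀ k, Integrable (fun ω => v k ω ^ ν) μ)
    (b : ℕ → ℝ)
    (hb_pos : ∀ n, 1 ≤ n → 0 < b n)
    (hb_mono : ∀ n, 1 ≤ n → b n ≤ b (n + 1))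
    (hb_top : Tendsto b atTop atTop)
    (h_sum : Summable (fun k : ℕ =>
        ((∫ ω, u (k + 1) ω ^ ν ∂μ) + (∫ ω, v (k + 1) ω ^ ν ∂μ)
          - (∫ ω, u k ω ^ ν ∂μ) - (∫ ω, v k ω ^ ν ∂μ)) / b (k + 1) ^ ν)) :
    ∀ᵐ ω ∂μ, Tendsto (fun n => S n ω / b n) atTop (nhds 0) :=
  slln_arbitrary_random_variables_pow_general μ X S u v hS hu hv ν hν hu_int hv_int b hb_pos hb_mono
    hb_top h_sum
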